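/- arXiv:2308.00266 — 3 statements merged into one kernel-verified Lean document; each statement's English description precedes it below -/
import Mathlib

section
/- A closed abelian subgroup of a free profinite group is procyclic. Equivalently: if H is a closed subgroup of a free profinite group and H is abelian, then H is topologically generated by a single element. -/
/-- The directed system indexing the profinite completion: finite-index normal subgroups. -/
structure NormalFI (G : Type*) [Group G] where
  N : Subgroup G
  normal : N.Normal
  fi : N.FiniteIndex

instance {G : Type*} [Group G] (i : NormalFI G) : i.N.Normal := i.normal
instance {G : Type*} [Group G] (i : NormalFI G) : TopologicalSpace (G ⧸ i.N) := ⊥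
instance {G : Type*} [Group G] (i : NormalFI G) : DiscreteTopology (G ⧸ i.N) := ⟨rfl⟩

/-- The transition map of the system, for `i.N ≤ j.N`. -/
def NormalFI.transMap {G : Type*} [Group G] {i j : NormalFI G} (h : i.N ≤ j.N) :
    G ⧸ i.N →* G ⧸ j.N :=
  QuotientGroup.map i.N j.N (MonoidHom.id G) (fun g hg => h hg)

/-- The subgroup of compatible sequences in `∏ G/N`. -/
def profSubgroup (G : Type*) [Group G] : Subgroup (∀ i : NormalFI G, G ⧸ i.N) where
  carrier := {x | ∀ (i j : NormalFI G) (h : i.N ≤ j.N), NormalFI.transMap h (x i) = x j}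
  one_mem' := by intro i j h; rw [Pi.one_apply, Pi.one_apply, map_one]
  mul_mem' := by
    intro x y hx hy i j h
    rw [Pi.mul_apply, Pi.mul_apply, map_mul, hx i j h, hy i j h]
  inv_mem' := by intro x hx i j h; rw [Pi.inv_apply, Pi.inv_apply, map_inv, hx i j h]

/-- The profinite completion of a group: the inverse limit of its finite quotients. -/
def ProfiniteCompletion (G : Type*) [Group G] : Type _ := profSubgroup G

instance (G : Type*) [Group G] : Group (ProfiniteCompletion G) :=
  inferInstanceAs (Group (profSubgroup G))

instance (G : Type*) [Group G] : TopologicalSpace (ProfiniteCompletion G) :=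
  inferInstanceAs (TopologicalSpace (profSubgroup G))

/-- The canonical map from a group to its profinite completion. -/
def completionMap (G : Type*) [Group G] : G →* ProfiniteCompletion G :=
  MonoidHom.mk' (fun g => ⟨fun _ => QuotientGroup.mk g, fun _ _ _ => rfl⟩)
    (fun _ _ => rfl)

/-!
### Auxiliary material

We prove the theorem in several steps.

* `Heis R` is the Heisenberg group over a commutative ring `R`; it is a nonabelian
  extension of `R × R` which is used to show that finite quotient images of a closed
  abelian subgroup of a free profinite group are cyclic (via the Nielsen–Schreier
  theorem, lifting maps from finite-index subgroups of the free group to `Heis (ZMod p)`).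
* `exists_indep_of_not_cyclic` : a noncyclic finite abelian group contains two
  "independent" elements of the same prime order.
* `pcKey` : each finite quotient image of `H` is (pro)cyclic.
* Finally a compactness argument produces a single topological generator.
-/

section Heisenberg

/-- The Heisenberg group over a commutative ring. -/
@[ext]
structure Heis (R : Type*) where
  a : R
  b : R
  c : R

namespace Heis

variable {R : Type*} [CommRing R]

instance : Mul (Heis R) := ⟨fun x y => ⟨x.a + y.a, x.b + y.b, x.c + y.c + x.a * y.b⟩⟩
instance : One (Heis R) := ⟨⟨0, 0, 0⟩⟩
instance : Inv (Heis R) := ⟨fun x => ⟨-x.a, -x.b, -x.c + x.a * x.b⟩⟩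

@[simp] lemma mul_a (x y : Heis R) : (x * y).a = x.a + y.a := rfl
@[simp] lemma mul_b (x y : Heis R) : (x * y).b = x.b + y.b := rfl
@[simp] lemma mul_c (x y : Heis R) : (x * y).c = x.c + y.c + x.a * y.b := rfl
@[simp] lemma one_a : (1 : Heis R).a = 0 := rfl
@[simp] lemma one_b : (1 : Heis R).b = 0 := rfl
@[simp] lemma one_c : (1 : Heis R).c = 0 := rfl
@[simp] lemma inv_a (x : Heis R) : (x⁻¹).a = -x.a := rfl
@[simp] lemma inv_b (x : Heis R) : (x⁻¹).b = -x.b := rfl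
@[simp] lemma inv_c (x : Heis R) : (x⁻¹).c = -x.c + x.a * x.b := rfl

instance : Group (Heis R) :=
  { (inferInstance : Mul (Heis R)), (inferInstance : One (Heis R)),
    (inferInstance : Inv (Heis R)) with
    mul_assoc := fun x y z => by ext <;> simp <;> ring
    one_mul := fun x => by ext <;> simp
    mul_one := fun x => by ext <;> simp
    inv_mul_cancel := fun x => by ext <;> simp <;> ring }

instance [Finite R] : Finite (Heis R) :=
  Finite.of_injective (fun x : Heis R => (x.a, x.b, x.c))
    (fun x y h => by
      cases x; cases y
      simpa [Prod.ext_iff] using h)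

lemma noncomm {x y : Heis R} (hxa : x.a = 1) (hxb : x.b = 0) (hya : y.a = 0)
    (hyb : y.b = 1) (h : x * y = y * x) : (1 : R) = 0 := by
  have hc := congrArg Heis.c h
  simp only [mul_c, hxa, hxb, hya, hyb] at hc
  linear_combination hc

end Heis

end Heisenberg

section IndependentPair

variable {G : Type*} [CommGroup G] [Finite G]

/-- Descent: given an element outside `zpowers g`, produce one of prime order
outside `zpowers g`. -/
lemma exists_prime_order_not_mem_zpowers (g : G) (hg : orderOf g = Monoid.exponent G) :
    ∀ n (x : G), orderOf x = n → x ∉ Subgroup.zpowers g →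
      ∃ q z, Nat.Prime q ∧ orderOf z = q ∧ z ∉ Subgroup.zpowers g := by
  intro n
  induction n using Nat.strong_induction_on with
  | _ n ih =>
    intro x hx hxg
    have hn1 : n ≠ 1 := by
      rintro rfl
      exact hxg (by rw [orderOf_eq_one_iff.mp hx]; exact Subgroup.one_mem _)
    have hn0 : n ≠ 0 := by
      rintro rfl
      exact absurd (hx ▸ orderOf_pos x) (by simp)
    set q := n.minFac with hqdef
    have hq : Nat.Prime q := Nat.minFac_prime hn1
    have hqn : q ∣ n := Nat.minFac_dvd n
    by_cases hxq : x ^ q ∈ Subgroup.zpowers g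
    · -- construct an element of order q outside zpowers g
      obtain ⟨m, hm⟩ := Subgroup.mem_zpowers_iff.mp hxq
      set e := Monoid.exponent G with he
      have he0 : e ≠ 0 := Monoid.ExponentExists.of_finite.exponent_ne_zero
      have hqe : q ∣ e := hqn.trans (hx ▸ Monoid.order_dvd_exponent x)
      set t := e / q with ht
      have htq : q * t = e := Nat.mul_div_cancel' hqe
      have ht0 : t ≠ 0 := by
        intro h0
        rw [h0, Nat.mul_zero] at htq
        exact he0 htq.symm
      have hxe : x ^ e = 1 := orderOf_dvd_iff_pow_eq_one.mp (hx ▸ Monoid.order_dvd_exponent x)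
      have hgmt : g ^ (m * (t : ℤ)) = 1 := by
        rw [zpow_mul, hm, zpow_natCast, ← pow_mul, htq, hxe]
      have hdvd : ((orderOf g : ℤ)) ∣ m * (t : ℤ) :=
        orderOf_dvd_iff_zpow_eq_one.mpr hgmt
      rw [hg, ← htq] at hdvd
      push_cast at hdvd
      have hqm : (q : ℤ) ∣ m := by
        have ht0' : (t : ℤ) ≠ 0 := Int.natCast_ne_zero.mpr ht0
        exact (mul_dvd_mul_iff_right ht0').mp hdvd
      set k := m / (q : ℤ) with hk
      have hkq : (q : ℤ) * k = m := Int.mul_ediv_cancel' hqm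
      set z := x * g ^ (-k) with hz
      have hzg : z ∉ Subgroup.zpowers g := by
        intro hmem
        apply hxg
        have : x = z * g ^ k := by rw [hz, mul_assoc, ← zpow_add, neg_add_cancel, zpow_zero, mul_one]
        rw [this]
        exact Subgroup.mul_mem _ hmem (Subgroup.zpow_mem _ (Subgroup.mem_zpowers g) k)
      have hz1 : z ≠ 1 := by
        intro h1
        exact hzg (h1 ▸ Subgroup.one_mem _)
      have hzq : z ^ q = 1 := by
        have : (g ^ (-k)) ^ q = g ^ (-m) := by
          rw [← zpow_natCast (g ^ (-k)) q, ← zpow_mul]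
          congr 1
          rw [← hkq]; ring
        rw [hz, mul_pow, this, ← hm, ← zpow_add, add_neg_cancel, zpow_zero]
      haveI : Fact (Nat.Prime q) := ⟨hq⟩
      exact ⟨q, z, hq, orderOf_eq_prime hzq hz1, hzg⟩
    · -- recurse on x ^ q
      have horder : orderOf (x ^ q) = n / q := by
        rw [orderOf_pow, hx, Nat.gcd_eq_right hqn]
      have hlt : n / q < n :=
        Nat.div_lt_self (Nat.pos_of_ne_zero hn0) hq.one_lt
      exact ih (n / q) hlt (x ^ q) horder hxq

/-- A noncyclic finite abelian group contains two independent elements of the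
same prime order. -/
lemma exists_indep_of_not_cyclic
    (h : ¬∃ g : G, ∀ x, x ∈ Subgroup.zpowers g) :
    ∃ (p : ℕ) (a b : G), Nat.Prime p ∧ orderOf a = p ∧ orderOf b = p ∧
      ∀ m n : ℤ, a ^ m * b ^ n = 1 → a ^ m = 1 ∧ b ^ n = 1 := by
  obtain ⟨g, hg⟩ := Monoid.exists_orderOf_eq_exponent (Monoid.ExponentExists.of_finite (G := G))
  push_neg at h
  obtain ⟨x, hx⟩ := h g
  obtain ⟨q, z, hq, hzq, hzg⟩ :=
    exists_prime_order_not_mem_zpowers g hg (orderOf x) x rfl hx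
  set e := Monoid.exponent G with he
  have he0 : e ≠ 0 := Monoid.ExponentExists.of_finite.exponent_ne_zero
  have hqe : q ∣ e := hzq ▸ Monoid.order_dvd_exponent z
  set w := g ^ (e / q) with hw
  have hwq : orderOf w = q := by
    rw [hw, orderOf_pow, hg, Nat.gcd_eq_right (Nat.div_dvd_of_dvd hqe),
      Nat.div_div_self hqe he0]
  have hwg : w ∈ Subgroup.zpowers g := by
    rw [hw, ← zpow_natCast]
    exact Subgroup.zpow_mem _ (Subgroup.mem_zpowers g) _
  refine ⟨q, w, z, hq, hwq, hzq, ?_⟩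
  intro m n hmn
  have hzn : z ^ n ∈ Subgroup.zpowers g := by
    have : z ^ n = (w ^ m)⁻¹ := by
      rw [eq_inv_iff_mul_eq_one, mul_comm]
      exact hmn
    rw [this]
    exact Subgroup.inv_mem _ (Subgroup.zpow_mem _ hwg m)
  have hzq1 : z ^ (q : ℤ) = 1 := by
    rw [zpow_natCast, ← hzq, pow_orderOf_eq_one]
  have hqn : (q : ℤ) ∣ n := by
    by_contra hndvd
    have hcop : IsCoprime (q : ℤ) n :=
      (Nat.prime_iff_prime_int.mp hq).coprime_iff_not_dvd.mpr hndvd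
    obtain ⟨u, v, huv⟩ := hcop
    have : z = (z ^ (q : ℤ)) ^ u * (z ^ n) ^ v := by
      rw [← zpow_mul, ← zpow_mul, ← zpow_add]
      calc z = z ^ (1 : ℤ) := (zpow_one z).symm
        _ = z ^ (u * (q : ℤ) + v * n) := by rw [huv]
        _ = z ^ ((q : ℤ) * u + n * v) := by ring_nf
    apply hzg
    rw [this, hzq1, one_zpow, one_mul]
    exact Subgroup.zpow_mem _ hzn v
  obtain ⟨j, hj⟩ := hqn
  have hz1 : z ^ n = 1 := by
    rw [hj, zpow_mul, hzq1, one_zpow]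
  refine ⟨?_, hz1⟩
  rw [hz1, mul_one] at hmn
  exact hmn

end IndependentPair

section Tau

variable {G : Type*} [Group G] {p : ℕ} [hp : Fact p.Prime] {a1 a2 : G}

/-- The homomorphism from the Heisenberg group sending `x` to `a1 ^ x.a * a2 ^ x.b`,
where `a1, a2` are commuting elements of order `p`. -/
def tauHom (h12 : Commute a1 a2) (h1 : orderOf a1 = p) (h2 : orderOf a2 = p) :
    Heis (ZMod p) →* G where
  toFun x := a1 ^ x.a.val * a2 ^ x.b.val
  map_one' := by simp [ZMod.val_zero]
  map_mul' x y := by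
    haveI : NeZero p := ⟨hp.out.ne_zero⟩
    have e1 : a1 ^ (x.a + y.a).val = a1 ^ x.a.val * a1 ^ y.a.val := by
      rw [ZMod.val_add, ← pow_add]
      exact pow_eq_pow_iff_modEq.mpr (by rw [h1]; exact Nat.mod_modEq _ p)
    have e2 : a2 ^ (x.b + y.b).val = a2 ^ x.b.val * a2 ^ y.b.val := by
      rw [ZMod.val_add, ← pow_add]
      exact pow_eq_pow_iff_modEq.mpr (by rw [h2]; exact Nat.mod_modEq _ p)
    simp only [Heis.mul_a, Heis.mul_b, e1, e2]
    exact (h12.pow_pow y.a.val x.b.val).mul_mul_mul_comm _ _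

@[simp] lemma tauHom_apply (h12 : Commute a1 a2) (h1 : orderOf a1 = p)
    (h2 : orderOf a2 = p) (x : Heis (ZMod p)) :
    tauHom h12 h1 h2 x = a1 ^ x.a.val * a2 ^ x.b.val := rfl

lemma closure_le_tauHom_range (h12 : Commute a1 a2) (h1 : orderOf a1 = p)
    (h2 : orderOf a2 = p) :
    Subgroup.closure {a1, a2} ≤ (tauHom h12 h1 h2).range := by
  haveI : Fact (1 < p) := ⟨hp.out.one_lt⟩
  rw [Subgroup.closure_le]
  rintro y (rfl | rfl)
  · exact ⟨⟨1, 0, 0⟩, by simp [ZMod.val_one, ZMod.val_zero]⟩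
  · exact ⟨⟨0, 1, 0⟩, by simp [ZMod.val_one, ZMod.val_zero]⟩

lemma tauHom_fiber (h12 : Commute a1 a2) (h1 : orderOf a1 = p) (h2 : orderOf a2 = p)
    (hind : ∀ m n : ℤ, a1 ^ m * a2 ^ n = 1 → a1 ^ m = 1 ∧ a2 ^ n = 1)
    (x : Heis (ZMod p)) (u v : ZMod p)
    (hx : tauHom h12 h1 h2 x = a1 ^ u.val * a2 ^ v.val) :
    x.a = u ∧ x.b = v := by
  haveI : NeZero p := ⟨hp.out.ne_zero⟩
  have hx' : a1 ^ (x.a.val : ℤ) * a2 ^ (x.b.val : ℤ) = a1 ^ (u.val : ℤ) * a2 ^ (v.val : ℤ) := by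
    rw [zpow_natCast, zpow_natCast, zpow_natCast, zpow_natCast]
    exact hx
  have key : a1 ^ ((x.a.val : ℤ) - u.val) * a2 ^ ((x.b.val : ℤ) - v.val) = 1 := by
    have c1 : Commute (a1 ^ (-(u.val : ℤ))) (a2 ^ (x.b.val : ℤ)) := h12.zpow_zpow _ _
    have c2 : Commute (a2 ^ (v.val : ℤ)) (a1 ^ (-(u.val : ℤ))) := (h12.zpow_zpow _ _).symm
    calc a1 ^ ((x.a.val : ℤ) - u.val) * a2 ^ ((x.b.val : ℤ) - v.val)
        = (a1 ^ (x.a.val : ℤ) * a1 ^ (-(u.val : ℤ))) *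
          (a2 ^ (x.b.val : ℤ) * a2 ^ (-(v.val : ℤ))) := by
          rw [← zpow_add, ← zpow_add, sub_eq_add_neg, sub_eq_add_neg]
      _ = (a1 ^ (x.a.val : ℤ) * a2 ^ (x.b.val : ℤ)) *
          (a1 ^ (-(u.val : ℤ)) * a2 ^ (-(v.val : ℤ))) := c1.mul_mul_mul_comm _ _
      _ = (a1 ^ (u.val : ℤ) * a2 ^ (v.val : ℤ)) *
          (a1 ^ (-(u.val : ℤ)) * a2 ^ (-(v.val : ℤ))) := by rw [hx']
      _ = (a1 ^ (u.val : ℤ) * a1 ^ (-(u.val : ℤ))) *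
          (a2 ^ (v.val : ℤ) * a2 ^ (-(v.val : ℤ))) := c2.mul_mul_mul_comm _ _
      _ = 1 := by rw [← zpow_add, ← zpow_add, add_neg_cancel, add_neg_cancel, zpow_zero,
          zpow_zero, one_mul]
  obtain ⟨e1, e2⟩ := hind _ _ key
  constructor
  · have d1 : (p : ℤ) ∣ (x.a.val : ℤ) - u.val := by
      have hd := orderOf_dvd_iff_zpow_eq_one.mpr e1
      rw [h1] at hd
      exact_mod_cast hd
    have z1 : (((x.a.val : ℤ) - u.val : ℤ) : ZMod p) = 0 :=
      (ZMod.intCast_zmod_eq_zero_iff_dvd _ p).mpr d1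
    push_cast at z1
    simpa [ZMod.natCast_val, ZMod.cast_id, sub_eq_zero] using z1
  · have d2 : (p : ℤ) ∣ (x.b.val : ℤ) - v.val := by
      have hd := orderOf_dvd_iff_zpow_eq_one.mpr e2
      rw [h2] at hd
      exact_mod_cast hd
    have z2 : (((x.b.val : ℤ) - v.val : ℤ) : ZMod p) = 0 :=
      (ZMod.intCast_zmod_eq_zero_iff_dvd _ p).mpr d2
    push_cast at z2
    simpa [ZMod.natCast_val, ZMod.cast_id, sub_eq_zero] using z2

end Tau

section ProfiniteInfrastructure

variable {G : Type*} [Group G]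

instance (i : NormalFI G) : Finite (G ⧸ i.N) :=
  @Subgroup.finite_quotient_of_finiteIndex _ _ _ i.fi

/-- The projection of the profinite completion onto a finite quotient. -/
def pcProj (i : NormalFI G) : ProfiniteCompletion G →* G ⧸ i.N where
  toFun x := x.1 i
  map_one' := rfl
  map_mul' _ _ := rfl

lemma mem_profSubgroup {x : ∀ i : NormalFI G, G ⧸ i.N} :
    x ∈ profSubgroup G ↔
      ∀ (i j : NormalFI G) (h : i.N ≤ j.N), NormalFI.transMap h (x i) = x j :=
  Iff.rfl

@[simp] lemma pcProj_apply (i : NormalFI G) (x : ProfiniteCompletion G) :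
    pcProj i x = x.1 i := rfl

lemma pcProj_compat {i j : NormalFI G} (h : i.N ≤ j.N) (x : ProfiniteCompletion G) :
    NormalFI.transMap h (pcProj i x) = pcProj j x :=
  (mem_profSubgroup.mp x.2) i j h

lemma pcProj_continuous (i : NormalFI G) : Continuous (pcProj i) :=
  (continuous_apply i).comp continuous_subtype_val

@[simp] lemma transMap_mk {i j : NormalFI G} (h : i.N ≤ j.N) (g : G) :
    NormalFI.transMap h (QuotientGroup.mk g) = QuotientGroup.mk g := by
  rw [NormalFI.transMap]
  rfl

lemma profSubgroup_isClosed :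
    IsClosed ((profSubgroup G : Set (∀ i : NormalFI G, G ⧸ i.N))) := by
  have hset : (profSubgroup G : Set (∀ i : NormalFI G, G ⧸ i.N)) =
      ⋂ (i : NormalFI G) (j : NormalFI G) (h : i.N ≤ j.N),
        {x | NormalFI.transMap h (x i) = x j} := by
    ext x
    simp only [Set.mem_iInter, Set.mem_setOf_eq, SetLike.mem_coe]
    exact mem_profSubgroup
  rw [hset]
  refine isClosed_iInter fun i => isClosed_iInter fun j => isClosed_iInter fun h => ?_
  exact isClosed_eq (continuous_of_discreteTopology.comp (continuous_apply i))
    (continuous_apply j)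

instance : CompactSpace (ProfiniteCompletion G) := by
  have h := (profSubgroup_isClosed (G := G)).isCompact
  rw [isCompact_iff_compactSpace] at h
  exact h

instance : Nonempty (NormalFI G) := ⟨⟨⊤, inferInstance, inferInstance⟩⟩

lemma NormalFI.exists_finset_le (I : Finset (NormalFI G)) :
    ∃ k : NormalFI G, ∀ i ∈ I, k.N ≤ i.N := by
  classical
  induction I using Finset.induction_on with
  | empty => exact ⟨⟨⊤, inferInstance, inferInstance⟩, by simp⟩
  | @insert a s _ ih =>
    obtain ⟨k, hk⟩ := ih
    haveI := a.fi
    haveI := k.fi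
    refine ⟨⟨a.N ⊓ k.N, inferInstance, inferInstance⟩, ?_⟩
    intro i hi
    rcases Finset.mem_insert.mp hi with rfl | hi
    · exact inf_le_left
    · exact le_trans inf_le_right (hk i hi)

end ProfiniteInfrastructure

section Key

/-- Key lemma: every finite quotient image of a closed abelian subgroup of a free
profinite group is cyclic. -/
lemma pcKey (S : Type) (H : Subgroup (ProfiniteCompletion (FreeGroup S)))
    (habel : ∀ x ∈ H, ∀ y ∈ H, x * y = y * x) (i0 : NormalFI (FreeGroup S)) :
    ∃ h0 ∈ H, ∀ h ∈ H, pcProj i0 h ∈ Subgroup.zpowers (pcProj i0 h0) := by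
  classical
  set A : Subgroup (FreeGroup S ⧸ i0.N) := H.map (pcProj i0) with hA
  have hAcomm : ∀ x y : ↥A, x * y = y * x := by
    rintro ⟨x, hx⟩ ⟨y, hy⟩
    obtain ⟨gx, hgxH, rfl⟩ := Subgroup.mem_map.mp hx
    obtain ⟨gy, hgyH, rfl⟩ := Subgroup.mem_map.mp hy
    apply Subtype.ext
    show pcProj i0 gx * pcProj i0 gy = pcProj i0 gy * pcProj i0 gx
    rw [← map_mul, ← map_mul, habel gx hgxH gy hgyH]
  letI commA : CommGroup ↥A := { (inferInstance : Group ↥A) with mul_comm := hAcomm }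
  by_cases hcyc : ∃ gA : ↥A, ∀ xA : ↥A, xA ∈ Subgroup.zpowers gA
  · obtain ⟨gA, hgen⟩ := hcyc
    obtain ⟨h0, h0H, hh0⟩ := Subgroup.mem_map.mp gA.2
    refine ⟨h0, h0H, fun h hH => ?_⟩
    obtain ⟨k, hk⟩ := Subgroup.mem_zpowers_iff.mp
      (hgen ⟨pcProj i0 h, Subgroup.mem_map.mpr ⟨h, hH, rfl⟩⟩)
    refine Subgroup.mem_zpowers_iff.mpr ⟨k, ?_⟩
    have hval := congrArg Subtype.val hk
    rw [SubgroupClass.coe_zpow] at hval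
    rw [hh0]
    exact hval
  · exfalso
    obtain ⟨p, aA, bA, hp, hap, hbp, hindA⟩ := exists_indep_of_not_cyclic hcyc
    haveI : Fact p.Prime := ⟨hp⟩
    set a1 : FreeGroup S ⧸ i0.N := (aA : FreeGroup S ⧸ i0.N) with ha1
    set a2 : FreeGroup S ⧸ i0.N := (bA : FreeGroup S ⧸ i0.N) with ha2
    have h1p : orderOf a1 = p := by rw [ha1, Subgroup.orderOf_coe]; exact hap
    have h2p : orderOf a2 = p := by rw [ha2, Subgroup.orderOf_coe]; exact hbp
    have hcomm : Commute a1 a2 := congrArg Subtype.val (hAcomm aA bA)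
    have hindep : ∀ m n : ℤ, a1 ^ m * a2 ^ n = 1 → a1 ^ m = 1 ∧ a2 ^ n = 1 := by
      intro m n hmn
      have hin : aA ^ m * bA ^ n = 1 := by
        apply Subtype.ext
        push_cast
        exact hmn
      obtain ⟨e1, e2⟩ := hindA m n hin
      constructor
      · have := congrArg Subtype.val e1
        simpa using this
      · have := congrArg Subtype.val e2
        simpa using this
    set τ : Heis (ZMod p) →* FreeGroup S ⧸ i0.N := tauHom hcomm h1p h2p with hτ
    set A₀ : Subgroup (FreeGroup S ⧸ i0.N) := Subgroup.closure {a1, a2} with hA₀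
    have hτr : A₀ ≤ τ.range := closure_le_tauHom_range hcomm h1p h2p
    set U : Subgroup (FreeGroup S) := A₀.comap (QuotientGroup.mk' i0.N) with hU
    haveI : IsFreeGroup ↥U := inferInstance
    have hgen_mem : ∀ gen : IsFreeGroup.Generators ↥U,
        QuotientGroup.mk' i0.N ((IsFreeGroup.of gen : ↥U) : FreeGroup S) ∈ A₀ :=
      fun gen => (IsFreeGroup.of gen : ↥U).2
    have hchoice : ∀ gen : IsFreeGroup.Generators ↥U,
        ∃ e : Heis (ZMod p), τ e = QuotientGroup.mk' i0.N ((IsFreeGroup.of gen : ↥U) : FreeGroup S) :=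
      fun gen => MonoidHom.mem_range.mp (hτr (hgen_mem gen))
    choose f hf using hchoice
    set ℓ : ↥U →* Heis (ZMod p) := IsFreeGroup.lift f with hℓdef
    have hℓ : ∀ u : ↥U, τ (ℓ u) = QuotientGroup.mk' i0.N (u : FreeGroup S) := by
      have hcomp : τ.comp ℓ = (QuotientGroup.mk' i0.N).comp U.subtype := by
        apply IsFreeGroup.ext_hom
        intro gen
        rw [MonoidHom.comp_apply, MonoidHom.comp_apply, hℓdef, IsFreeGroup.lift_of, hf gen]
        rfl
      intro u
      have := DFunLike.congr_fun hcomp u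
      simpa using this
    -- finite index normal subgroup killing everything in the kernel of ℓ
    set M : Subgroup (FreeGroup S) := Subgroup.map U.subtype ℓ.ker with hM
    haveI hfinQ : Finite (FreeGroup S ⧸ i0.N) := inferInstance
    have hUindex : U.index ≠ 0 := by
      rw [hU, Subgroup.index_comap_of_surjective A₀ (QuotientGroup.mk'_surjective i0.N)]
      exact Subgroup.index_ne_zero_of_finite
    haveI : Finite (Heis (ZMod p)) := inferInstance
    haveI : ℓ.ker.FiniteIndex := inferInstance
    haveI hMfi : M.FiniteIndex := by
      constructor
      rw [hM, Subgroup.index_map_subtype]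
      exact mul_ne_zero Subgroup.FiniteIndex.index_ne_zero hUindex
    haveI := i0.fi
    set C : NormalFI (FreeGroup S) := ⟨i0.N ⊓ M.normalCore, inferInstance, inferInstance⟩
      with hC
    have hCle : C.N ≤ i0.N := inf_le_left
    have hker : ∀ w ∈ C.N, ∃ hw : w ∈ U, ℓ ⟨w, hw⟩ = 1 := by
      intro w hw
      have hwM : w ∈ M := by
        have hw2 : w ∈ M.normalCore :=
          (inf_le_right : i0.N ⊓ M.normalCore ≤ M.normalCore) hw
        exact M.normalCore_le hw2
      obtain ⟨u, huker, huval⟩ := Subgroup.mem_map.mp hwM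
      have hwU : w ∈ U := huval ▸ u.2
      refine ⟨hwU, ?_⟩
      have : (⟨w, hwU⟩ : ↥U) = u := Subtype.ext huval.symm
      rw [this]
      exact huker
    -- representatives
    obtain ⟨hh1, hh1H, hh1p⟩ := Subgroup.mem_map.mp aA.2
    obtain ⟨hh2, hh2H, hh2p⟩ := Subgroup.mem_map.mp bA.2
    obtain ⟨g1, hg1⟩ := QuotientGroup.mk_surjective (pcProj C hh1)
    obtain ⟨g2, hg2⟩ := QuotientGroup.mk_surjective (pcProj C hh2)
    have hg1i0 : (QuotientGroup.mk g1 : FreeGroup S ⧸ i0.N) = a1 := by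
      have hcompat := pcProj_compat hCle hh1
      rw [← hg1, transMap_mk] at hcompat
      rw [hcompat, hh1p]
    have hg2i0 : (QuotientGroup.mk g2 : FreeGroup S ⧸ i0.N) = a2 := by
      have hcompat := pcProj_compat hCle hh2
      rw [← hg2, transMap_mk] at hcompat
      rw [hcompat, hh2p]
    have hg1U : g1 ∈ U := by
      show QuotientGroup.mk' i0.N g1 ∈ A₀
      have : QuotientGroup.mk' i0.N g1 = a1 := hg1i0
      rw [this]
      exact Subgroup.subset_closure (by left; rfl)
    have hg2U : g2 ∈ U := by
      show QuotientGroup.mk' i0.N g2 ∈ A₀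
      have : QuotientGroup.mk' i0.N g2 = a2 := hg2i0
      rw [this]
      exact Subgroup.subset_closure (by right; rfl)
    set x := ℓ ⟨g1, hg1U⟩ with hx
    set y := ℓ ⟨g2, hg2U⟩ with hy
    have hxy : x * y = y * x := by
      have hcom : hh1 * hh2 = hh2 * hh1 := habel hh1 hh1H hh2 hh2H
      have hmkeq : (QuotientGroup.mk (g1 * g2) : FreeGroup S ⧸ C.N) =
          QuotientGroup.mk (g2 * g1) := by
        have l1 : (QuotientGroup.mk (g1 * g2) : FreeGroup S ⧸ C.N) = pcProj C (hh1 * hh2) := by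
          rw [map_mul, ← hg1, ← hg2, QuotientGroup.mk_mul]
        have l2 : (QuotientGroup.mk (g2 * g1) : FreeGroup S ⧸ C.N) = pcProj C (hh2 * hh1) := by
          rw [map_mul, ← hg1, ← hg2, QuotientGroup.mk_mul]
        rw [l1, l2, hcom]
      have hwC : (g1 * g2)⁻¹ * (g2 * g1) ∈ C.N := QuotientGroup.eq.mp hmkeq
      obtain ⟨hwU, hℓw⟩ := hker _ hwC
      have hsplit : (⟨(g1 * g2)⁻¹ * (g2 * g1), hwU⟩ : ↥U) =
          ((⟨g1, hg1U⟩ : ↥U) * ⟨g2, hg2U⟩)⁻¹ * ((⟨g2, hg2U⟩ : ↥U) * ⟨g1, hg1U⟩) := by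
        apply Subtype.ext
        rfl
      rw [hsplit] at hℓw
      rw [map_mul, map_inv, map_mul, map_mul] at hℓw
      have := inv_mul_eq_one.mp hℓw
      rw [← hx, ← hy] at this
      exact this
    have hτx : τ x = a1 := by
      rw [hx, hℓ]
      exact hg1i0
    have hτy : τ y = a2 := by
      rw [hy, hℓ]
      exact hg2i0
    haveI : Fact (1 < p) := ⟨hp.one_lt⟩
    obtain ⟨hxa, hxb⟩ := tauHom_fiber hcomm h1p h2p hindep x 1 0
      (by rw [hτx]; simp [ZMod.val_one, ZMod.val_zero])
    obtain ⟨hya, hyb⟩ := tauHom_fiber hcomm h1p h2p hindep y 0 1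
      (by rw [hτy]; simp [ZMod.val_one, ZMod.val_zero])
    exact one_ne_zero (Heis.noncomm hxa hxb hya hyb hxy)

end Key

/-- A closed abelian subgroup of a free profinite group (the profinite
completion of a free group) is procyclic, i.e. topologically generated by one element. -/
theorem stmt_1 (S : Type) (H : Subgroup (ProfiniteCompletion (FreeGroup S)))
    (hclosed : IsClosed (H : Set (ProfiniteCompletion (FreeGroup S))))
    (habel : ∀ x ∈ H, ∀ y ∈ H, x * y = y * x) :
    ∃ s ∈ H, closure ((Subgroup.zpowers s : Subgroup (ProfiniteCompletion (FreeGroup S))) :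
      Set (ProfiniteCompletion (FreeGroup S))) = (H : Set (ProfiniteCompletion (FreeGroup S))) := by
  classical
  set T : NormalFI (FreeGroup S) → Set (ProfiniteCompletion (FreeGroup S)) := fun i =>
    {h | h ∈ H ∧ ∀ h' ∈ H, pcProj i h' ∈ Subgroup.zpowers (pcProj i h)} with hT
  have Tmono : ∀ {k i : NormalFI (FreeGroup S)}, k.N ≤ i.N → T k ⊆ T i := by
    intro k i hki h hh
    refine ⟨hh.1, fun h' hh' => ?_⟩
    obtain ⟨m, hm⟩ := Subgroup.mem_zpowers_iff.mp (hh.2 h' hh')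
    refine Subgroup.mem_zpowers_iff.mpr ⟨m, ?_⟩
    rw [← pcProj_compat hki h, ← pcProj_compat hki h', ← hm, ← map_zpow]
  have hTne : ∀ i, (T i).Nonempty := by
    intro i
    obtain ⟨h0, h0H, hgen⟩ := pcKey S H habel i
    exact ⟨h0, h0H, hgen⟩
  have hTclosed : ∀ i, IsClosed (T i) := by
    intro i
    have heq : T i = (H : Set (ProfiniteCompletion (FreeGroup S))) ∩
        (pcProj i) ⁻¹' {t | ∀ h' ∈ H, pcProj i h' ∈ Subgroup.zpowers t} := by
      ext h
      exact Iff.rfl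
    rw [heq]
    exact hclosed.inter (IsClosed.preimage (pcProj_continuous i) (isClosed_discrete _))
  have hTdir : Directed (· ⊇ ·) T := by
    intro i j
    haveI := i.fi
    haveI := j.fi
    exact ⟨⟨i.N ⊓ j.N, inferInstance, inferInstance⟩, Tmono inf_le_left, Tmono inf_le_right⟩
  obtain ⟨s, hs⟩ := IsCompact.nonempty_iInter_of_directed_nonempty_isCompact_isClosed
    T hTdir hTne (fun i => (hTclosed i).isCompact) hTclosed
  rw [Set.mem_iInter] at hs
  have hsH : s ∈ H := (hs ⟨⊤, inferInstance, inferInstance⟩).1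
  refine ⟨s, hsH, ?_⟩
  apply Set.Subset.antisymm
  · apply closure_minimal ?_ hclosed
    intro x hx
    obtain ⟨m, rfl⟩ := Subgroup.mem_zpowers_iff.mp (SetLike.mem_coe.mp hx)
    exact SetLike.mem_coe.mpr (H.zpow_mem hsH m)
  · intro h hh
    have hhH : h ∈ H := hh
    rw [mem_closure_iff]
    intro o ho hho
    obtain ⟨O, hO, rfl⟩ := isOpen_induced_iff.mp ho
    obtain ⟨I, u, hIu, hsub⟩ := isOpen_pi_iff.mp hO _ hho
    obtain ⟨k, hk⟩ := NormalFI.exists_finset_le I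
    obtain ⟨m, hm⟩ := Subgroup.mem_zpowers_iff.mp ((hs k).2 h hhH)
    refine ⟨s ^ m, ?_, ?_⟩
    · show (s ^ m).1 ∈ O
      apply hsub
      rw [Set.mem_pi]
      intro i hi
      have hproj : pcProj i (s ^ m) = pcProj i h := by
        rw [map_zpow, ← pcProj_compat (hk i hi) s, ← pcProj_compat (hk i hi) h, ← hm,
          ← map_zpow]
      have hhu := (hIu i hi).2
      show (s ^ m).1 i ∈ u i
      have : (s ^ m).1 i = h.1 i := hproj
      rw [this]
      exact hhu
    · exact SetLike.mem_coe.mpr (Subgroup.mem_zpowers_iff.mpr ⟨m, rfl⟩)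
end

section
/- Let G be a group and φ, ψ ∈ G elements of infinite order. Suppose there exist positive integers m, n and g ∈ G with gφᵐg⁻¹ = ψⁿ, and suppose there is a homomorphism q : G → Q onto a finite group such that mn divides the order of q(φ) and the order of q(φ) equals the order of q(ψ). Then m = n. -/
/-- If `φ, ψ` have infinite order, `gφᵐg⁻¹ = ψⁿ`, and some finite quotient `q`
satisfies `mn ∣ ord(q(φ))` and `ord(q(φ)) = ord(q(ψ))`, then `m = n`. -/
theorem stmt_5 (G Q : Type*) [Group G] [Group Q] [Finite Q] (φ ψ : G)
    (hφ : ¬ IsOfFinOrder φ) (hψ : ¬ IsOfFinOrder ψ)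
    (m n : ℕ) (hm : 0 < m) (hn : 0 < n) (g : G)
    (hconj : g * φ ^ m * g⁻¹ = ψ ^ n)
    (q : G →* Q) (hq : Function.Surjective q)
    (hdvd : m * n ∣ orderOf (q φ))
    (heq : orderOf (q φ) = orderOf (q ψ)) :
    m = n := by
  have hmd : m ∣ orderOf (q φ) := (dvd_mul_right m n).trans hdvd
  have hnd : n ∣ orderOf (q φ) := (dvd_mul_left n m).trans hdvd
  have hord : orderOf (q φ) ≠ 0 := (orderOf_pos (q φ)).ne'
  have hc : q g * q φ ^ m * (q g)⁻¹ = q ψ ^ n := by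
    simpa [map_mul, map_pow] using congrArg q hconj
  have hsc : SemiconjBy (q g) (q φ ^ m) (q ψ ^ n) := by
    rw [SemiconjBy, ← hc]; group
  have h1 : orderOf (q φ ^ m) = orderOf (q ψ ^ n) := SemiconjBy.orderOf_eq _ hsc
  rw [orderOf_pow_of_dvd hm.ne' hmd, orderOf_pow_of_dvd hn.ne' (heq ▸ hnd), ← heq] at h1
  have := congrArg (orderOf (q φ) / ·) h1
  simpa [Nat.div_div_self hmd hord, Nat.div_div_self hnd hord] using this
end

section
/- An extension of a virtually free group by a finite group is virtually free: if 1 → F → G → V → 1 with F finite and V virtually free, then G is virtually free. In particular PSL(2,ℤ) ⋉ (ℤ/2ℤ)² is virtually free. -/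
/-- A group is virtually free if it has a finite-index subgroup isomorphic to a free group. -/
def VirtuallyFree (G : Type*) [Group G] : Prop :=
  ∃ H : Subgroup G, H.FiniteIndex ∧ ∃ S : Type, Nonempty (H ≃* FreeGroup S)

/-- `PSL(2, ℤ)`. -/
abbrev PSL2Z : Type :=
  Matrix.SpecialLinearGroup (Fin 2) ℤ ⧸ Subgroup.center (Matrix.SpecialLinearGroup (Fin 2) ℤ)

/-- The Klein four group `(ℤ/2ℤ)²` written multiplicatively. -/
abbrev KleinFour : Type := Multiplicative (ZMod 2) × Multiplicative (ZMod 2)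


open Matrix Subgroup
open Matrix.SpecialLinearGroup


open Subgroup in
theorem ext_vfree {G V : Type*} [Group G] [Group V]
    (F : Subgroup G) (hFfin : Finite F)
    (π : G →* V) (hπ : Function.Surjective π) (hker : π.ker = F)
    (hV : VirtuallyFree V) : VirtuallyFree G := by
  obtain ⟨H, hHfi, S, ⟨e⟩⟩ := hV
  -- section of π over generators
  have sec : ∀ x : S, ∃ g : G, π g = ((e.symm (FreeGroup.of x) : H) : V) := fun x => hπ _
  choose s hs using sec
  set φ : FreeGroup S →* G := FreeGroup.lift s with hφdef
  have hcomm : ∀ w : FreeGroup S, π (φ w) = ((e.symm w : H) : V) := by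
    intro w
    have : π.comp φ = H.subtype.comp (e.symm.toMonoidHom.comp (MonoidHom.id _)) := by
      apply FreeGroup.ext_hom
      intro x
      simp [hφdef, hs x]
    simpa using DFunLike.congr_fun this w
  have hinj : Function.Injective φ := by
    intro w w' h
    have : ((e.symm w : H) : V) = ((e.symm w' : H) : V) := by rw [← hcomm, ← hcomm, h]
    exact e.symm.injective (Subtype.ext this)
  set K : Subgroup G := H.comap π with hK
  have hKfi : K.FiniteIndex := ⟨by rw [hK, index_comap_of_surjective _ hπ]; exact hHfi.1⟩
  have hle : φ.range ≤ K := by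
    rintro g ⟨w, rfl⟩
    simp only [hK, mem_comap, hcomm]
    exact (e.symm w).2
  have hFK : F ≤ K := by
    rw [← hker]; intro g hg
    simp only [hK, mem_comap, hg, MonoidHom.mem_ker.mp hg, one_mem]
  have hquot : Finite (K ⧸ (φ.range.subgroupOf K)) := by
    have hsurj : Function.Surjective
        (fun f : F => ((QuotientGroup.mk ⟨(f : G), hFK f.2⟩ : K ⧸ (φ.range.subgroupOf K)))) := by
      rintro q
      obtain ⟨k, rfl⟩ := QuotientGroup.mk_surjective q
      have hk : π (k : G) ∈ H := k.2
      set w : FreeGroup S := e ⟨π k, hk⟩ with hw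
      have hπg : π (φ w) = π (k : G) := by rw [hcomm, hw]; simp
      have hf : (k : G) * (φ w)⁻¹ ∈ F := by
        rw [← hker, MonoidHom.mem_ker, _root_.map_mul, _root_.map_inv, hπg, mul_inv_cancel]
      refine ⟨⟨_, hf⟩, ?_⟩
      simp only
      rw [QuotientGroup.eq, Subgroup.mem_subgroupOf]
      refine ⟨w, ?_⟩
      push_cast
      group
    exact Finite.of_surjective _ hsurj
  haveI := hquot
  have hrel : (φ.range.subgroupOf K).FiniteIndex := finiteIndex_of_finite_quotient
  refine ⟨φ.range, ⟨?_⟩, S, ⟨(MonoidHom.ofInjective hinj).symm⟩⟩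
  rw [← relIndex_mul_index hle]
  exact Nat.mul_ne_zero hrel.1 hKfi.1

abbrev SL2Z := Matrix.SpecialLinearGroup (Fin 2) ℤ

def Amat : SL2Z := ⟨!![1,2;0,1], by norm_num [Matrix.det_fin_two_of]⟩
def Bmat : SL2Z := ⟨!![1,0;2,1], by norm_num [Matrix.det_fin_two_of]⟩
def A'mat : SL2Z := ⟨!![1,-2;0,1], by norm_num [Matrix.det_fin_two_of]⟩
def B'mat : SL2Z := ⟨!![1,0;-2,1], by norm_num [Matrix.det_fin_two_of]⟩
def Wmat : SL2Z := ⟨!![-1,0;0,-1], by norm_num [Matrix.det_fin_two_of]⟩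

lemma mul_entry (g M : SL2Z) (i j : Fin 2) :
    (g * M) i j = g i 0 * M 0 j + g i 1 * M 1 j := by
  rw [Matrix.SpecialLinearGroup.coe_mul, Matrix.mul_apply, Fin.sum_univ_two]

example : Amat 0 0 = 1 := by simp [Amat]
example : Amat 0 1 = 2 := by simp [Amat]
example (M : SL2Z) : (Amat * M) 0 1 = M 0 1 + 2 * M 1 1 := by
  (rw [mul_entry]; simp [Amat])

lemma AA' : Amat * A'mat = 1 := by
  ext i j
  fin_cases i <;> fin_cases j <;> (rw [mul_entry]; simp [Amat, A'mat])

lemma detM (M : SL2Z) : M 0 0 * M 1 1 - M 0 1 * M 1 0 = 1 := by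
  have := M.2
  rwa [Matrix.det_fin_two] at this

lemma A'inv : A'mat = Amat⁻¹ := eq_inv_of_mul_eq_one_left (by
  ext i j; fin_cases i <;> fin_cases j <;> (rw [mul_entry]; simp [Amat, A'mat]))

lemma B'inv : B'mat = Bmat⁻¹ := eq_inv_of_mul_eq_one_left (by
  ext i j; fin_cases i <;> fin_cases j <;> (rw [mul_entry]; simp [Bmat, B'mat]))

def S3 : Subgroup SL2Z := closure {Amat, Bmat, Wmat}

lemma Amem : Amat ∈ S3 := subset_closure (by simp)
lemma Bmem : Bmat ∈ S3 := subset_closure (by simp)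
lemma Wmem : Wmat ∈ S3 := subset_closure (by simp)
lemma A'mem : A'mat ∈ S3 := A'inv ▸ inv_mem Amem
lemma B'mem : B'mat ∈ S3 := B'inv ▸ inv_mem Bmem



lemma diag_cases (M : SL2Z) (hb : M 0 1 = 0) (hc : M 1 0 = 0) : M = 1 ∨ M = Wmat := by
  have hdet := detM M
  rw [hb, hc] at hdet
  simp only [zero_mul, mul_zero, sub_zero] at hdet
  rcases Int.mul_eq_one_iff_eq_one_or_neg_one.mp hdet with ⟨h1, h2⟩ | ⟨h1, h2⟩
  · left; ext i j; fin_cases i <;> fin_cases j <;>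
      simp [h1, h2, hb, hc, Matrix.SpecialLinearGroup.coe_one, Matrix.one_apply]
  · right; ext i j; fin_cases i <;> fin_cases j <;> simp [h1, h2, hb, hc, Wmat]

/-- Upper triangular case. -/
lemma tri_mem : ∀ m : ℕ, ∀ M : SL2Z, (M 0 1).natAbs ≤ m → M 1 0 = 0 → 2 ∣ M 0 1 → M ∈ S3 := by
  intro m
  induction m with
  | zero =>
    intro M h1 hc _
    rcases diag_cases M (by omega) hc with rfl | rfl
    · exact one_mem _
    · exact Wmem
  | succ m ih =>
    intro M h1 hc hb
    by_cases hb0 : M 0 1 = 0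
    · rcases diag_cases M hb0 hc with rfl | rfl
      · exact one_mem _
      · exact Wmem
    · -- reduce |b| by 2
      have hdet := detM M
      rw [hc] at hdet
      simp only [mul_zero, sub_zero] at hdet
      have hd : M 1 1 = 1 ∨ M 1 1 = -1 := by
        rcases Int.mul_eq_one_iff_eq_one_or_neg_one.mp hdet with h | h
        · exact Or.inl h.2
        · exact Or.inr h.2
      have key : ∀ g : SL2Z, g⁻¹ ∈ S3 →
          ((g * M) 0 1).natAbs ≤ m → (g * M) 1 0 = 0 → 2 ∣ (g * M) 0 1 → M ∈ S3 := by
        intro g hg' h₁ h₂ h₃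
        have := mul_mem hg' (ih (g * M) h₁ h₂ h₃)
        rwa [← mul_assoc, inv_mul_cancel, one_mul] at this
      have eA : (Amat * M) 0 1 = M 0 1 + 2 * M 1 1 := by (rw [mul_entry]; simp [Amat])
      have eA' : (A'mat * M) 0 1 = M 0 1 - 2 * M 1 1 := by (rw [mul_entry]; simp [A'mat]); ring
      have cA : (Amat * M) 1 0 = M 1 0 := by (rw [mul_entry]; simp [Amat])
      have cA' : (A'mat * M) 1 0 = M 1 0 := by (rw [mul_entry]; simp [A'mat])
      rcases hd with h | h
      · by_cases hsgn : 0 ≤ M 0 1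
        · exact key A'mat (by rw [A'inv, inv_inv]; exact Amem)
            (by rw [eA', h]; omega) (by rw [cA', hc]) (by rw [eA', h]; omega)
        · exact key Amat (inv_mem Amem)
            (by rw [eA, h]; omega) (by rw [cA, hc]) (by rw [eA, h]; omega)
      · by_cases hsgn : 0 ≤ M 0 1
        · exact key Amat (inv_mem Amem)
            (by rw [eA, h]; omega) (by rw [cA, hc]) (by rw [eA, h]; omega)
        · exact key A'mat (by rw [A'inv, inv_inv]; exact Amem)
            (by rw [eA', h]; omega) (by rw [cA', hc]) (by rw [eA', h]; omega)

lemma sanov_mem : ∀ n : ℕ, ∀ M : SL2Z, (M 0 0).natAbs + (M 1 0).natAbs ≤ n →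
    2 ∣ M 0 1 → 2 ∣ M 1 0 → M ∈ S3 := by
  intro n
  induction n with
  | zero =>
    intro M h1 hb hc
    have hdet := detM M
    have ha : M 0 0 = 0 := by omega
    have hc0 : M 1 0 = 0 := by omega
    rw [ha, hc0] at hdet
    simp at hdet
  | succ n ih =>
    intro M h1 hb hc
    by_cases hc0 : M 1 0 = 0
    · exact tri_mem (M 0 1).natAbs M le_rfl hc0 hb
    · have hdet := detM M
      have haodd : ¬ (2 ∣ M 0 0) := by
        rintro ⟨k, hk⟩
        obtain ⟨u, hu⟩ := hb
        obtain ⟨v, hv⟩ := hc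
        rw [hk, hu, hv] at hdet
        have h2 : (2:ℤ) ∣ 1 := ⟨k * M 1 1 - 2 * u * v, by linear_combination -hdet⟩
        norm_num at h2
      have key : ∀ g : SL2Z, g⁻¹ ∈ S3 →
          ((g * M) 0 0).natAbs + ((g * M) 1 0).natAbs ≤ n →
          2 ∣ (g * M) 0 1 → 2 ∣ (g * M) 1 0 → M ∈ S3 := by
        intro g hg' h₁ h₂ h₃
        have := mul_mem hg' (ih (g * M) h₁ h₂ h₃)
        rwa [← mul_assoc, inv_mul_cancel, one_mul] at this
      by_cases hlt : (M 1 0).natAbs < (M 0 0).natAbs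
      · -- reduce a
        have eA : (Amat * M) 0 0 = M 0 0 + 2 * M 1 0 := by (rw [mul_entry]; simp [Amat])
        have eA' : (A'mat * M) 0 0 = M 0 0 - 2 * M 1 0 := by (rw [mul_entry]; simp [A'mat]); ring
        have cA : (Amat * M) 1 0 = M 1 0 := by (rw [mul_entry]; simp [Amat])
        have cA' : (A'mat * M) 1 0 = M 1 0 := by (rw [mul_entry]; simp [A'mat])
        have bA : (Amat * M) 0 1 = M 0 1 + 2 * M 1 1 := by (rw [mul_entry]; simp [Amat])
        have bA' : (A'mat * M) 0 1 = M 0 1 - 2 * M 1 1 := by (rw [mul_entry]; simp [A'mat]); ring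
        by_cases h00 : 0 ≤ M 0 0 <;> by_cases h10 : 0 ≤ M 1 0
        · exact key A'mat (by rw [A'inv, inv_inv]; exact Amem)
            (by rw [eA', cA']; omega) (by rw [bA']; omega) (by rw [cA']; omega)
        · exact key Amat (inv_mem Amem)
            (by rw [eA, cA]; omega) (by rw [bA]; omega) (by rw [cA]; omega)
        · exact key Amat (inv_mem Amem)
            (by rw [eA, cA]; omega) (by rw [bA]; omega) (by rw [cA]; omega)
        · exact key A'mat (by rw [A'inv, inv_inv]; exact Amem)
            (by rw [eA', cA']; omega) (by rw [bA']; omega) (by rw [cA']; omega)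
      · -- reduce c
        have hgt : (M 0 0).natAbs < (M 1 0).natAbs := by omega
        have eB : (Bmat * M) 1 0 = M 1 0 + 2 * M 0 0 := by (rw [mul_entry]; simp [Bmat]); ring
        have eB' : (B'mat * M) 1 0 = M 1 0 - 2 * M 0 0 := by (rw [mul_entry]; simp [B'mat]); ring
        have aB : (Bmat * M) 0 0 = M 0 0 := by (rw [mul_entry]; simp [Bmat])
        have aB' : (B'mat * M) 0 0 = M 0 0 := by (rw [mul_entry]; simp [B'mat])
        have bB : (Bmat * M) 0 1 = M 0 1 := by (rw [mul_entry]; simp [Bmat])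
        have bB' : (B'mat * M) 0 1 = M 0 1 := by (rw [mul_entry]; simp [B'mat])
        by_cases h00 : 0 ≤ M 0 0 <;> by_cases h10 : 0 ≤ M 1 0
        · exact key B'mat (by rw [B'inv, inv_inv]; exact Bmem)
            (by rw [eB', aB']; omega) (by rw [bB']; omega) (by rw [eB']; omega)
        · exact key Bmat (inv_mem Bmem)
            (by rw [eB, aB]; omega) (by rw [bB]; omega) (by rw [eB]; omega)
        · exact key Bmat (inv_mem Bmem)
            (by rw [eB, aB]; omega) (by rw [bB]; omega) (by rw [eB]; omega)
        · exact key B'mat (by rw [B'inv, inv_inv]; exact Bmem)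
            (by rw [eB', aB']; omega) (by rw [bB']; omega) (by rw [eB']; omega)


/-- The mod 4 congruence-type condition preserved by `Amat, Bmat`. -/
def Qsub : Subgroup SL2Z where
  carrier := {M | ((M 0 0 : ZMod 4) = 1 ∧ (M 1 1 : ZMod 4) = 1) ∧
      (2 * (M 0 1 : ZMod 4) = 0 ∧ 2 * (M 1 0 : ZMod 4) = 0)}
  one_mem' := by
    constructor <;> constructor <;>
      simp [Matrix.SpecialLinearGroup.coe_one, Matrix.one_apply]
  mul_mem' := by
    rintro M N ⟨⟨ha, hd⟩, hb, hc⟩ ⟨⟨ha', hd'⟩, hb', hc'⟩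
    have key : ∀ x y z w : ZMod 4, ((x = 1 ∧ y = 1 ∧ 2 * z = 0 ∧ 2 * w = 0) ∨
        (2 * x = 0 ∧ 2 * y = 0 ∧ z = 1 ∧ w = 1)) → x * y + z * w = 1 := by decide
    have key2 : ∀ x y z w : ZMod 4, ((x = 1 ∧ 2 * y = 0) ∨ (2 * x = 0 ∧ y = 1)) →
        ((z = 1 ∧ 2 * w = 0) ∨ (2 * z = 0 ∧ w = 1)) → 2 * (x * y + z * w) = 0 := by decide
    refine ⟨⟨?_, ?_⟩, ?_, ?_⟩ <;> rw [mul_entry] <;> push_cast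
    · exact key _ _ _ _ (Or.inl ⟨ha, ha', hb, hc'⟩)
    · exact key _ _ _ _ (Or.inr ⟨hc, hb', hd, hd'⟩)
    · exact key2 _ _ _ _ (Or.inl ⟨ha, hb'⟩) (Or.inr ⟨hb, hd'⟩)
    · exact key2 _ _ _ _ (Or.inr ⟨hc, ha'⟩) (Or.inl ⟨hd, hc'⟩)
  inv_mem' := by
    rintro M ⟨⟨ha, hd⟩, hb, hc⟩
    have hinv : ∀ i j : Fin 2, (M⁻¹) i j = Matrix.adjugate (M : Matrix (Fin 2) (Fin 2) ℤ) i j :=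
      fun i j => by rw [Matrix.SpecialLinearGroup.coe_inv]
    have hadj := Matrix.adjugate_fin_two (M : Matrix (Fin 2) (Fin 2) ℤ)
    refine ⟨⟨?_, ?_⟩, ?_, ?_⟩ <;> rw [hinv, hadj] <;> simp <;> push_cast
    · exact hd
    · exact ha
    · linear_combination hb
    · linear_combination hc

noncomputable section PingPong
open UpperHalfPlane Complex Pointwise

lemma sl_smul_coe (g : SL2Z) (z : ℍ) :
    ((g • z : ℍ) : ℂ) = ((g 0 0 : ℂ) * z + (g 0 1 : ℂ)) / ((g 1 0 : ℂ) * z + (g 1 1 : ℂ)) := by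
  rw [UpperHalfPlane.specialLinearGroup_apply]
  simp only [UpperHalfPlane.coe_mk]
  norm_num

/-- the generators -/
def gen : Fin 2 → SL2Z := ![Amat, Bmat]

def Xset : Fin 2 → Set ℍ :=
  ![{z | 1 ≤ (z : ℂ).re}, {z | Complex.normSq (2 * (z : ℂ) - 1) ≤ 1}]

def Yset : Fin 2 → Set ℍ :=
  ![{z | (z : ℂ).re ≤ -1}, {z | Complex.normSq (2 * (z : ℂ) + 1) ≤ 1}]

lemma A_smul (z : ℍ) : ((Amat • z : ℍ) : ℂ) = (z : ℂ) + 2 := by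
  rw [sl_smul_coe]; simp [Amat]

lemma A'_smul (z : ℍ) : ((Amat⁻¹ • z : ℍ) : ℂ) = (z : ℂ) - 2 := by
  rw [← A'inv, sl_smul_coe]; simp [A'mat]; ring

lemma denom_ne (z : ℍ) (c : ℂ) (hc : c.im = 0) (hc0 : c.re ≠ 0) : c * (z : ℂ) + 1 ≠ 0 := by
  intro h
  have him : (c * (z : ℂ) + 1).im = c.re * (z : ℂ).im := by
    simp [Complex.add_im, Complex.mul_im, hc]
  rw [h] at him
  have := z.2
  simp only [Complex.zero_im] at him
  have : (z : ℂ).im > 0 := z.2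
  rcases mul_eq_zero.mp him.symm with h | h
  · exact hc0 h
  · linarith

lemma B_smul (z : ℍ) : ((Bmat • z : ℍ) : ℂ) = (z : ℂ) / (2 * (z : ℂ) + 1) := by
  rw [sl_smul_coe]; simp [Bmat]

lemma B'_smul (z : ℍ) : ((Bmat⁻¹ • z : ℍ) : ℂ) = (z : ℂ) / (-2 * (z : ℂ) + 1) := by
  rw [← B'inv, sl_smul_coe]; simp [B'mat]


def z₁ : ℍ := ⟨1 + Complex.I, by simp⟩
def z₂ : ℍ := ⟨(1 + Complex.I)/2, by norm_num⟩

lemma re_im_expand (z : ℍ) : Complex.normSq (2 * (z:ℂ) - 1) = (2*(z:ℂ).re - 1)^2 + (2*(z:ℂ).im)^2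
    ∧ Complex.normSq (2 * (z:ℂ) + 1) = (2*(z:ℂ).re + 1)^2 + (2*(z:ℂ).im)^2 := by
  constructor <;> simp [Complex.normSq_apply, Complex.add_re, Complex.add_im, Complex.sub_re,
    Complex.sub_im, Complex.mul_re, Complex.mul_im] <;> ring

lemma hXne : ∀ i, (Xset i).Nonempty := by
  have h0 : z₁ ∈ Xset 0 := by
    simp only [Xset, Matrix.cons_val_zero, Set.mem_setOf_eq, z₁]
    simp
  have h1 : z₂ ∈ Xset 1 := by
    show Complex.normSq (2 * (((1 + Complex.I)/2 : ℂ)) - 1) ≤ 1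
    have : 2 * (((1 + Complex.I)/2 : ℂ)) - 1 = Complex.I := by ring
    rw [this, Complex.normSq_I]
  intro i; fin_cases i
  · exact ⟨z₁, h0⟩
  · exact ⟨z₂, h1⟩

lemma mem_X0 (z : ℍ) : z ∈ Xset 0 ↔ 1 ≤ (z:ℂ).re := Iff.rfl
lemma mem_X1 (z : ℍ) : z ∈ Xset 1 ↔ Complex.normSq (2 * (z:ℂ) - 1) ≤ 1 := Iff.rfl
lemma mem_Y0 (z : ℍ) : z ∈ Yset 0 ↔ (z:ℂ).re ≤ -1 := Iff.rfl
lemma mem_Y1 (z : ℍ) : z ∈ Yset 1 ↔ Complex.normSq (2 * (z:ℂ) + 1) ≤ 1 := Iff.rfl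

lemma impos (z : ℍ) : ¬ (z ∈ Xset 1 ∧ z ∈ Yset 1) := by
  rintro ⟨h1, h2⟩
  rw [mem_X1] at h1; rw [mem_Y1] at h2
  rw [(re_im_expand z).1] at h1; rw [(re_im_expand z).2] at h2
  have him : 0 < (z:ℂ).im := z.2
  nlinarith

lemma X1_re (z : ℍ) (h : z ∈ Xset 1) : 0 < (z:ℂ).re ∧ (z:ℂ).re < 1 := by
  rw [mem_X1, (re_im_expand z).1] at h
  have him : 0 < (z:ℂ).im := z.2
  constructor <;> nlinarith

lemma Y1_re (z : ℍ) (h : z ∈ Yset 1) : -1 < (z:ℂ).re ∧ (z:ℂ).re < 0 := by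
  rw [mem_Y1, (re_im_expand z).2] at h
  have him : 0 < (z:ℂ).im := z.2
  constructor <;> nlinarith

lemma hXdisj : Pairwise (Function.onFun Disjoint Xset) := by
  have h : Disjoint (Xset 0) (Xset 1) := Set.disjoint_left.mpr (fun z hz0 hz1 => by
    rw [mem_X0] at hz0
    exact absurd (X1_re z hz1).2 (by linarith))
  intro i j hij
  fin_cases i <;> fin_cases j <;> first
    | exact absurd rfl hij
    | exact h
    | exact h.symm

lemma hYdisj : Pairwise (Function.onFun Disjoint Yset) := by
  have h : Disjoint (Yset 0) (Yset 1) := Set.disjoint_left.mpr (fun z hz0 hz1 => by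
    rw [mem_Y0] at hz0
    exact absurd (Y1_re z hz1).1 (by linarith))
  intro i j hij
  fin_cases i <;> fin_cases j <;> first
    | exact absurd rfl hij
    | exact h
    | exact h.symm

lemma hXYdisj : ∀ i j, Disjoint (Xset i) (Yset j) := by
  have h00 : Disjoint (Xset 0) (Yset 0) := Set.disjoint_left.mpr (fun z hz0 hz1 => by
    rw [mem_X0] at hz0; rw [mem_Y0] at hz1; linarith)
  have h01 : Disjoint (Xset 0) (Yset 1) := Set.disjoint_left.mpr (fun z hz0 hz1 => by
    rw [mem_X0] at hz0
    exact absurd (Y1_re z hz1).2 (by linarith))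
  have h10 : Disjoint (Xset 1) (Yset 0) := Set.disjoint_left.mpr (fun z hz0 hz1 => by
    rw [mem_Y0] at hz1
    exact absurd (X1_re z hz0).1 (by linarith))
  have h11 : Disjoint (Xset 1) (Yset 1) := Set.disjoint_left.mpr (fun z hz0 hz1 =>
    impos z ⟨hz0, hz1⟩)
  intro i j
  fin_cases i <;> fin_cases j
  · exact h00
  · exact h01
  · exact h10
  · exact h11

lemma hXstep : ∀ i, gen i • (Yset i)ᶜ ⊆ Xset i := by
  have h0 : Amat • (Yset 0)ᶜ ⊆ Xset 0 := by
    rintro x ⟨z, hz, rfl⟩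
    rw [Set.mem_compl_iff, mem_Y0, not_le] at hz
    rw [mem_X0, A_smul]
    simp only [Complex.add_re, UpperHalfPlane.coe_re] at hz ⊢
    norm_num
    linarith
  have h1 : Bmat • (Yset 1)ᶜ ⊆ Xset 1 := by
    rintro x ⟨z, hz, rfl⟩
    rw [Set.mem_compl_iff, mem_Y1, not_le] at hz
    rw [mem_X1, B_smul]
    have hd : (2 : ℂ) * (z : ℂ) + 1 ≠ 0 := denom_ne z 2 (by simp) (by simp)
    have key : 2 * ((z:ℂ) / (2 * (z:ℂ) + 1)) - 1 = -1 / (2 * (z:ℂ) + 1) := by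
      field_simp; ring
    rw [key]
    rw [show ((-1 : ℂ)/(2 * (z:ℂ) + 1)) = -(1/(2 * (z:ℂ) + 1)) by ring]
    rw [Complex.normSq_neg, map_div₀, Complex.normSq_one]
    rw [div_le_one (by linarith)]
    linarith
  intro i; fin_cases i
  · exact h0
  · exact h1

lemma hYstep : ∀ i, gen⁻¹ i • (Xset i)ᶜ ⊆ Yset i := by
  have h0 : Amat⁻¹ • (Xset 0)ᶜ ⊆ Yset 0 := by
    rintro x ⟨z, hz, rfl⟩
    rw [Set.mem_compl_iff, mem_X0, not_le] at hz
    rw [mem_Y0, A'_smul]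
    simp only [Complex.sub_re, UpperHalfPlane.coe_re] at hz ⊢
    norm_num
    linarith
  have h1 : Bmat⁻¹ • (Xset 1)ᶜ ⊆ Yset 1 := by
    rintro x ⟨z, hz, rfl⟩
    rw [Set.mem_compl_iff, mem_X1, not_le] at hz
    rw [mem_Y1, B'_smul]
    have hd : (-2 : ℂ) * (z : ℂ) + 1 ≠ 0 := denom_ne z (-2) (by simp) (by norm_num)
    have hd2 : (1:ℂ) - (z:ℂ) * 2 ≠ 0 := fun h => hd (by linear_combination h)
    have key : 2 * ((z:ℂ) / (-2 * (z:ℂ) + 1)) + 1 = 1 / (-2 * (z:ℂ) + 1) := by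
      rw [mul_div_assoc', div_add' _ _ _ hd]
      congr 1
      ring
    rw [key, map_div₀, Complex.normSq_one]
    have hns : Complex.normSq (-2 * (z:ℂ) + 1) = Complex.normSq (2 * (z:ℂ) - 1) := by
      rw [show (-2 * (z:ℂ) + 1) = -(2 * (z:ℂ) - 1) by ring, Complex.normSq_neg]
    rw [hns, div_le_one (by linarith)]
    linarith
  intro i; fin_cases i
  · exact h0
  · exact h1

lemma pingpong_inj : Function.Injective (FreeGroup.lift gen) :=
  FreeGroup.injective_lift_of_ping_pong gen Xset Yset hXne hXdisj hYdisj hXYdisj hXstep hYstep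

end PingPong

section Assemble
open Matrix.SpecialLinearGroup

abbrev PSL2Z' : Type := SL2Z ⧸ center SL2Z

noncomputable def ψh : SL2Z →* PSL2Z' := QuotientGroup.mk' (center SL2Z)

noncomputable def θh : FreeGroup (Fin 2) →* PSL2Z' := ψh.comp (FreeGroup.lift gen)

lemma W_center : Wmat ∈ Subgroup.center SL2Z := by
  rw [Matrix.SpecialLinearGroup.mem_center_iff]
  refine ⟨-1, by norm_num, ?_⟩
  ext i j
  fin_cases i <;> fin_cases j <;>
    simp [Wmat, Matrix.scalar_apply, Matrix.diagonal_apply]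

lemma lift_range_le_Q : (FreeGroup.lift gen).range ≤ Qsub := by
  rw [FreeGroup.range_lift_eq_closure, closure_le]
  rintro x ⟨i, rfl⟩
  fin_cases i
  · show Amat ∈ Qsub
    refine ⟨⟨?_, ?_⟩, ?_, ?_⟩ <;> simp [Amat] <;> decide
  · show Bmat ∈ Qsub
    refine ⟨⟨?_, ?_⟩, ?_, ?_⟩ <;> simp [Bmat] <;> decide

lemma theta_inj : Function.Injective θh := by
  rw [injective_iff_map_eq_one]
  intro w hw
  have hc : FreeGroup.lift gen w ∈ Subgroup.center SL2Z := by
    rw [← QuotientGroup.ker_mk' (Subgroup.center SL2Z)]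
    exact hw
  obtain ⟨r, hr2, hrs⟩ := Matrix.SpecialLinearGroup.mem_center_iff.mp hc
  have hr : r = 1 ∨ r = -1 := by
    rw [Fintype.card_fin, pow_two] at hr2
    exact mul_self_eq_one_iff.mp hr2
  rcases hr with rfl | rfl
  · apply pingpong_inj
    rw [_root_.map_one]
    apply Subtype.ext
    rw [← hrs]
    ext i j
    fin_cases i <;> fin_cases j <;>
      simp [Matrix.scalar_apply, Matrix.diagonal_apply, Matrix.SpecialLinearGroup.coe_one,
        Matrix.one_apply]
  · exfalso
    have hmem : FreeGroup.lift gen w ∈ Qsub := lift_range_le_Q ⟨w, rfl⟩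
    have h00 : (FreeGroup.lift gen w) 0 0 = -1 := by
      have := congrFun (congrFun hrs 0) 0
      simp [Matrix.scalar_apply, Matrix.diagonal_apply] at this
      omega
    have := hmem.1.1
    rw [h00] at this
    norm_num at this
    exact absurd this (by decide)

noncomputable def red2 : SL2Z →* Matrix.SpecialLinearGroup (Fin 2) (ZMod 2) :=
  Matrix.SpecialLinearGroup.map (Int.castRingHom (ZMod 2))

lemma ker_le_S3 : red2.ker ≤ S3 := by
  intro M hM
  rw [MonoidHom.mem_ker] at hM
  have hent : ∀ i j : Fin 2, ((M i j : ZMod 2)) = (1 : Matrix (Fin 2) (Fin 2) (ZMod 2)) i j := by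
    intro i j
    have := congrFun (congrFun (congrArg Subtype.val hM) i) j
    exact this
  apply sanov_mem ((M 0 0).natAbs + (M 1 0).natAbs) M le_rfl
  · have := hent 0 1
    rw [Matrix.one_apply_ne (by decide)] at this
    exact (ZMod.intCast_zmod_eq_zero_iff_dvd _ 2).mp this
  · have := hent 1 0
    rw [Matrix.one_apply_ne (by decide)] at this
    exact (ZMod.intCast_zmod_eq_zero_iff_dvd _ 2).mp this

theorem psl_vfree : VirtuallyFree PSL2Z' := by
  refine ⟨θh.range, ⟨?_⟩, Fin 2, ⟨(MonoidHom.ofInjective theta_inj).symm⟩⟩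
  have hsurj : Function.Surjective ψh := QuotientGroup.mk'_surjective _
  have hle : S3 ≤ θh.range.comap ψh := by
    rw [S3, closure_le]
    rintro x hx
    simp only [Set.mem_insert_iff, Set.mem_singleton_iff] at hx
    rcases hx with rfl | rfl | rfl
    · exact ⟨FreeGroup.of 0, by simp [θh, gen]⟩
    · exact ⟨FreeGroup.of 1, by simp [θh, gen]⟩
    · show ψh Wmat ∈ θh.range
      have h1 : ψh Wmat = 1 := by
        rw [← MonoidHom.mem_ker]
        show Wmat ∈ (QuotientGroup.mk' (Subgroup.center SL2Z)).ker
        rw [QuotientGroup.ker_mk']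
        exact W_center
      rw [h1]; exact one_mem _
  haveI : Finite red2.range := Subtype.finite
  haveI hK : red2.ker.FiniteIndex := Subgroup.finiteIndex_ker red2
  have h1 : (θh.range.comap ψh).FiniteIndex :=
    Subgroup.finiteIndex_of_le (le_trans ker_le_S3 hle)
  have := Subgroup.index_comap_of_surjective θh.range hsurj
  rw [← this]
  exact h1.1

end Assemble

/-- An extension of a virtually free group by a finite group is virtually free;
in particular `PSL(2,ℤ) ⋉ (ℤ/2ℤ)²` is virtually free. -/
theorem stmt_17 (G V : Type*) [Group G] [Group V]
    (F : Subgroup G) (hFn : F.Normal) (hFfin : Finite F)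
    (π : G →* V) (hπ : Function.Surjective π) (hker : π.ker = F)
    (hV : VirtuallyFree V) :
    VirtuallyFree G ∧
      ∀ ρ : PSL2Z →* MulAut KleinFour, VirtuallyFree (SemidirectProduct KleinFour PSL2Z ρ) := by
  refine ⟨ext_vfree F hFfin π hπ hker hV, fun ρ => ?_⟩
  have hfin : Finite ↥(SemidirectProduct.inl (φ := ρ)).range := by
    apply Finite.of_surjective
      (fun n : KleinFour => (⟨SemidirectProduct.inl n, n, rfl⟩ :
        (SemidirectProduct.inl (φ := ρ)).range))
    rintro ⟨x, n, rfl⟩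
    exact ⟨n, rfl⟩
  exact ext_vfree _ hfin SemidirectProduct.rightHom SemidirectProduct.rightHom_surjective
    SemidirectProduct.range_inl_eq_ker_rightHom.symm psl_vfree
end
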